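/- arXiv:1504.03732 — 2 statements merged into one kernel-verified Lean document; each statement's English description precedes it below -/
import Mathlib

section
/- Let T ∈ A⊗B⊗C with dim A = m be A-concise. If the border rank of T equals m, then there exists a complete flag A₁ ⊂ A₂ ⊂ ⋯ ⊂ A_m = A^* with dim A_j = j such that for every j, every element of the subspace T(A_j) ⊆ B⊗C has rank at most j as a linear map C^* → B (i.e. T(A_j) is contained in the cone over the j-th secant variety of the Segre variety of rank-one elements of B⊗C). -/
open scoped BigOperators

noncomputable section

/-- A tensor in coordinates: an element of ℂ^a ⊗ ℂ^b ⊗ ℂ^c. -/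
abbrev Tensor (a b c : ℕ) : Type := Fin a → Fin b → Fin c → ℂ

/-- `T` has rank at most `r`: it is a sum of `r` simple tensors. -/
def tensorRankLE {a b c : ℕ} (T : Tensor a b c) (r : ℕ) : Prop :=
  ∃ (u : Fin r → Fin a → ℂ) (v : Fin r → Fin b → ℂ) (w : Fin r → Fin c → ℂ),
    ∀ i j k, T i j k = ∑ s, u s i * v s j * w s k

/-- The rank of a tensor. -/
def tensorRank {a b c : ℕ} (T : Tensor a b c) : ℕ :=
  sInf {r | tensorRankLE T r}

/-- The border rank of a tensor: the least `r` such that `T` is a limit of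
tensors of rank at most `r`. -/
def borderRank {a b c : ℕ} (T : Tensor a b c) : ℕ :=
  sInf {r | T ∈ closure {S : Tensor a b c | tensorRankLE S r}}

/-- The tslice (contraction) of `T` at `α ∈ A^*`, as an element of `B ⊗ C`,
identified with a matrix. -/
def tslice {a b c : ℕ} (T : Tensor a b c) (α : Fin a → ℂ) :
    Matrix (Fin b) (Fin c) ℂ :=
  Matrix.of fun j k => ∑ i, α i * T i j k

def tsliceB {a b c : ℕ} (T : Tensor a b c) (β : Fin b → ℂ) :
    Matrix (Fin a) (Fin c) ℂ :=
  Matrix.of fun i k => ∑ j, β j * T i j k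

def tsliceC {a b c : ℕ} (T : Tensor a b c) (γ : Fin c → ℂ) :
    Matrix (Fin a) (Fin b) ℂ :=
  Matrix.of fun i j => ∑ k, γ k * T i j k

/-- `T` is `1_A`-generic: `T(A^*)` contains an invertible matrix. -/
def OneAGeneric {a m : ℕ} (T : Tensor a m m) : Prop :=
  ∃ α : Fin a → ℂ, IsUnit (tslice T α)

/-- The space `E_{α₀}(T) = { T(α) T(α₀)⁻¹ : α ∈ A^* } ⊆ End(B)`. -/
def Espace {a m : ℕ} (T : Tensor a m m) (α₀ : Fin a → ℂ) :
    Set (Matrix (Fin m) (Fin m) ℂ) :=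
  {X | ∃ α : Fin a → ℂ, X = tslice T α * (tslice T α₀)⁻¹}

/-!
A tensor of border rank `m` is a limit of tensors `Sₙ = ∑_{s<m} uₛ ⊗ vₛ ⊗ wₛ`. Gram–Schmidt
applied to `u_{m-1}, …, u_0` gives an orthonormal basis `e_0, …, e_{m-1}` of `A^*` with
`⟨e_t, u_s⟩ = 0` for `t < s`, so `Sₙ` maps `span (e_t : t < j)` into combinations of the `j`
rank-one matrices `vₛ ⊗ wₛ`, `s < j`. Orthonormal families form a compact set and matrices of
rank `≤ j` a closed one, so a limit of such bases along a subsequence spans the required flag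
for `T`.
-/

open Filter Topology Module Submodule InnerProductSpace

theorem Matrix.isClosed_setOf_rank_le {𝕜 : Type*} [NontriviallyNormedField 𝕜] [CompleteSpace 𝕜]
    {m n : Type*} [Fintype m] [Fintype n] [DecidableEq n] (j : ℕ) :
    IsClosed {M : Matrix m n 𝕜 | M.rank ≤ j} := by
  let Φ : Matrix m n 𝕜 →ₗ[𝕜] (n → 𝕜) →L[𝕜] (m → 𝕜) :=
    LinearMap.toContinuousLinearMap.toLinearMap ∘ₗ Matrix.toLin'.toLinearMap
  have hΦ : {M : Matrix m n 𝕜 | M.rank ≤ j} =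
      Φ ⁻¹' {f | ((j + 1 : ℕ) : Cardinal) ≤ (f : (n → 𝕜) →ₗ[𝕜] (m → 𝕜)).rank}ᶜ := by
    ext M
    simp only [Set.mem_ofPred_eq, Set.mem_preimage, Set.mem_compl_iff, not_le, LinearMap.rank,
      ← finrank_eq_rank, Nat.cast_lt, Nat.lt_succ_iff]
    rfl
  rw [hΦ]
  exact (isOpen_setOfPred_nat_le_rank (j + 1)).isClosed_compl.preimage
    Φ.continuous_of_finiteDimensional

theorem isCompact_setOf_orthonormal {𝕜 E ι : Type*} [RCLike 𝕜] [NormedAddCommGroup E]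
    [InnerProductSpace 𝕜 E] [FiniteDimensional 𝕜 E] [Fintype ι] :
    IsCompact {v : ι → E | Orthonormal 𝕜 v} := by
  classical
  have := FiniteDimensional.proper_rclike 𝕜 E
  have hclosed : IsClosed {v : ι → E | Orthonormal 𝕜 v} := by
    simp only [orthonormal_iff_ite, Set.ofPred_forall]
    exact isClosed_iInter fun i => isClosed_iInter fun j =>
      isClosed_eq (by fun_prop) continuous_const
  refine (isCompact_closedBall (0 : ι → E) 1).of_isClosed_subset hclosed fun v hv => ?_
  exact mem_closedBall_zero_iff.2 ((pi_norm_le_iff_of_nonneg zero_le_one).2 fun i => (hv.1 i).le)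

theorem exists_orthonormalBasis_inner_eq_zero_of_lt {𝕜 E : Type*} [RCLike 𝕜]
    [NormedAddCommGroup E] [InnerProductSpace 𝕜 E] [FiniteDimensional 𝕜 E] {n : ℕ}
    (hn : finrank 𝕜 E = n) (f : Fin n → E) :
    ∃ b : OrthonormalBasis (Fin n) 𝕜 E, ∀ s t, t < s → inner 𝕜 (f s) (b t) = 0 := by
  let g := f ∘ Fin.rev
  refine ⟨(gramSchmidtOrthonormalBasis (by simpa using hn) g).reindex Fin.revPerm,
    fun s t hts => ?_⟩
  rw [inner_eq_zero_symm]
  simpa [g] using gramSchmidtOrthonormalBasis_inv_triangular _ g (Fin.rev_lt_rev.2 hts)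

section Tensor

variable {a b c : ℕ}

theorem tensorRankLE_mul (T : Tensor a b c) : tensorRankLE T (a * b) := by
  refine ⟨fun s i => if i = (finProdFinEquiv.symm s).1 then 1 else 0,
    fun s j => if j = (finProdFinEquiv.symm s).2 then 1 else 0,
    fun s => T (finProdFinEquiv.symm s).1 (finProdFinEquiv.symm s).2, fun i j k => ?_⟩
  rw [← finProdFinEquiv.sum_comp]
  simp [Fintype.sum_prod_type, ite_mul]

theorem mem_closure_borderRank (T : Tensor a b c) :
    T ∈ closure {S : Tensor a b c | tensorRankLE S (borderRank T)} :=
  Nat.sInf_mem (s := {r | T ∈ closure {S | tensorRankLE S r}})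
    ⟨a * b, subset_closure (tensorRankLE_mul T)⟩

theorem continuous_tslice : Continuous fun p : Tensor a b c × (Fin a → ℂ) => tslice p.1 p.2 :=
  continuous_pi fun j => continuous_pi fun k => by simp only [tslice, Matrix.of_apply]; fun_prop

theorem rank_tslice_le_card {r : ℕ} {S : Tensor a b c} {u : Fin r → Fin a → ℂ}
    {v : Fin r → Fin b → ℂ} {w : Fin r → Fin c → ℂ}
    (hS : ∀ i j k, S i j k = ∑ s, u s i * v s j * w s k) {α : Fin a → ℂ} (I : Finset (Fin r))
    (hα : ∀ s ∉ I, ∑ i, α i * u s i = 0) : (tslice S α).rank ≤ I.card := by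
  have hfac : tslice S α = (Matrix.of fun j (s : I) => v s j) *
      Matrix.of fun (s : I) k => (∑ i, α i * u s i) * w s k := by
    ext j k
    calc tslice S α j k = ∑ s, v s j * ((∑ i, α i * u s i) * w s k) := by
          simp only [tslice, Matrix.of_apply, hS, Finset.mul_sum, Finset.sum_mul]
          rw [Finset.sum_comm]
          exact Finset.sum_congr rfl fun s _ => Finset.sum_congr rfl fun i _ => by ring
      _ = ∑ s ∈ I, v s j * ((∑ i, α i * u s i) * w s k) :=
          (Finset.sum_subset (Finset.subset_univ I) fun s _ hs => by simp [hα s hs]).symm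
      _ = _ := (Finset.sum_coe_sort I _).symm
  rw [hfac]
  exact (Matrix.rank_mul_le_left _ _).trans ((Matrix.rank_le_card_width _).trans_eq
    (Fintype.card_coe I))

-- The paper's flag condition for the partial flag `span (e t : t < j)`, `j ≤ k`.
def FlagCondition {k : ℕ} (T : Tensor a b c) (e : Fin k → Fin a → ℂ) : Prop :=
  ∀ (j : ℕ) (x : Fin k → ℂ), (∀ t : Fin k, j ≤ (t : ℕ) → x t = 0) →
    (tslice T (∑ t, x t • e t)).rank ≤ j

theorem isClosed_setOf_flagCondition {k : ℕ} :
    IsClosed {p : Tensor a b c × (Fin k → Fin a → ℂ) | FlagCondition p.1 p.2} := by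
  simp only [FlagCondition, Set.ofPred_forall]
  refine isClosed_iInter fun j => isClosed_iInter fun x => isClosed_iInter fun _ => ?_
  have hcont : Continuous fun p : Tensor a b c × (Fin k → Fin a → ℂ) =>
      (p.1, ∑ t, x t • p.2 t) := by
    fun_prop
  exact (Matrix.isClosed_setOf_rank_le j).preimage (continuous_tslice.comp hcont)

theorem FlagCondition.of_tendsto {k : ℕ} {S : ℕ → Tensor a b c} {T : Tensor a b c}
    {e : ℕ → Fin k → Fin a → ℂ} {e' : Fin k → Fin a → ℂ} (hS : Tendsto S atTop (𝓝 T))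
    (he : Tendsto e atTop (𝓝 e')) (h : ∀ n, FlagCondition (S n) (e n)) : FlagCondition T e' :=
  show (T, e') ∈ {p : Tensor a b c × _ | FlagCondition p.1 p.2} from
    isClosed_setOf_flagCondition.mem_of_tendsto (hS.prodMk_nhds he) (.of_forall h)

theorem flagCondition_of_eq_sum {k : ℕ} {S : Tensor a b c} {u : Fin k → Fin a → ℂ}
    {v : Fin k → Fin b → ℂ} {w : Fin k → Fin c → ℂ}
    (hS : ∀ i j l, S i j l = ∑ s, u s i * v s j * w s l) {e : Fin k → Fin a → ℂ}
    (he : ∀ s t, t < s → ∑ i, e t i * u s i = 0) : FlagCondition S e := by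
  intro j x hx
  refine (rank_tslice_le_card hS {s | (s : ℕ) < j} fun s hs => ?_).trans ?_
  · simp only [Finset.sum_apply, Pi.smul_apply, smul_eq_mul, Finset.sum_mul]
    rw [Finset.sum_comm]
    refine Finset.sum_eq_zero fun t _ => ?_
    by_cases ht : j ≤ (t : ℕ)
    · simp [hx t ht]
    · simp only [Finset.mem_filter, Finset.mem_univ, true_and] at hs
      simp only [mul_assoc, ← Finset.mul_sum, he s t (by omega), mul_zero]
  · rw [Fin.card_filter_val_lt]
    exact min_le_right _ _

theorem exists_flag_of_flagCondition {T : Tensor a b c} {e : Fin a → Fin a → ℂ}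
    (hli : LinearIndependent ℂ e) (hT : FlagCondition T e) :
    ∃ F : Fin (a + 1) → Submodule ℂ (Fin a → ℂ),
      Monotone F ∧
      (∀ j, finrank ℂ (F j) = (j : ℕ)) ∧
      F (Fin.last a) = ⊤ ∧
      (∀ j, ∀ α ∈ F j, (tslice T α).rank ≤ (j : ℕ)) := by
  have hfinrank (j : Fin (a + 1)) :
      finrank ℂ (span ℂ (e '' {t | (t : ℕ) < j})) = j := by
    rw [Set.image_eq_range, finrank_span_eq_card (b := fun t : {t : Fin a | (t : ℕ) < j} => e t)
      (hli.comp _ Subtype.val_injective)]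
    simpa [Fintype.card_subtype, Fin.card_filter_val_lt] using Nat.lt_succ_iff.1 j.isLt
  refine ⟨fun j => span ℂ (e '' {t | (t : ℕ) < j}), fun j j' hjj' => ?_, hfinrank, ?_,
    fun j α hα => ?_⟩
  · exact span_mono (Set.image_mono fun t (ht : (t : ℕ) < j) => lt_of_lt_of_le ht hjj')
  · exact eq_top_of_finrank_eq ((hfinrank _).trans (finrank_fin_fun ℂ).symm)
  · obtain ⟨l, hl, rfl⟩ := Finsupp.mem_span_image_iff_linearCombination ℂ |>.1 hα
    rw [Finsupp.linearCombination_apply, Finsupp.sum_fintype _ _ fun t => zero_smul ℂ (e t)]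
    exact hT j l fun t ht => (Finsupp.mem_supported' ℂ l).1 hl t (not_lt.2 ht)

end Tensor

theorem stmt4_general {m b c : ℕ} (T : Tensor m b c)
    (hbr : borderRank T = m) :
    ∃ F : Fin (m + 1) → Submodule ℂ (Fin m → ℂ),
      Monotone F ∧
      (∀ j, Module.finrank ℂ (F j) = (j : ℕ)) ∧
      F (Fin.last m) = ⊤ ∧
      (∀ j, ∀ α ∈ F j, (tslice T α).rank ≤ (j : ℕ)) := by
  obtain ⟨S, hS, hST⟩ := mem_closure_iff_seq_limit.1 (hbr ▸ mem_closure_borderRank T)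
  choose u v w huvw using hS
  -- `⟪star u, x⟫ = ∑ i, x i * u i` is the bilinear pairing `A^* × A → ℂ`.
  choose B hB using fun n => exists_orthonormalBasis_inner_eq_zero_of_lt
    finrank_euclideanSpace_fin fun s => WithLp.toLp 2 (star (u n s))
  have hSn (n : ℕ) : FlagCondition (S n) fun t => (B n t).ofLp := by
    refine flagCondition_of_eq_sum (huvw n) fun s t hts => ?_
    have h := hB n s t hts
    rwa [EuclideanSpace.inner_eq_star_dotProduct, WithLp.ofLp_toLp, star_star] at h
  obtain ⟨e, he, φ, hφ, hlim⟩ :=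
    (isCompact_setOf_orthonormal (𝕜 := ℂ)).tendsto_subseq (x := fun n => ⇑(B n))
      fun n => (B n).orthonormal
  have hcont : Continuous fun (f : Fin m → EuclideanSpace ℂ (Fin m)) t => (f t).ofLp := by
    fun_prop
  have hT : FlagCondition T fun t => (e t).ofLp :=
    .of_tendsto (hST.comp hφ.tendsto_atTop) ((hcont.tendsto e).comp hlim) fun n => hSn (φ n)
  exact exists_flag_of_flagCondition
    (he.linearIndependent.map' (WithLp.linearEquiv 2 ℂ (Fin m → ℂ)).toLinearMap
      (LinearEquiv.ker _)) hT

/-- (Corollary `flagcor`, the flag condition.) If `T ∈ ℂ^m ⊗ B ⊗ C` is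
`A`-concise and `R̲(T) = m`, then there is a complete flag
`A₁ ⊂ ⋯ ⊂ A_m = A^*`, `dim A_j = j`, with every element of `T(A_j)` of rank
at most `j` (i.e. `T(A_j)` lies in the cone over the `j`-th secant variety of
the Segre variety). Here the flag is indexed by `Fin (m+1)`, starting with the
trivial subspace. -/
theorem stmt4 {m b c : ℕ} (T : Tensor m b c)
    (hconc : Function.Injective (tslice T))
    (hbr : borderRank T = m) :
    ∃ F : Fin (m + 1) → Submodule ℂ (Fin m → ℂ),
      Monotone F ∧
      (∀ j, Module.finrank ℂ (F j) = (j : ℕ)) ∧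
      F (Fin.last m) = ⊤ ∧
      (∀ j, ∀ α ∈ F j, (tslice T α).rank ≤ (j : ℕ)) :=
  stmt4_general T hbr
end
end

section
/- (Substitution method.) Fix a basis a₁,…,a_a of A and write T = Σ_{i=1}^{a} aᵢ⊗Mᵢ with Mᵢ ∈ B⊗C, and suppose M₁ ≠ 0 and R(T) = r. Then there exist constants λ₂,…,λ_a ∈ ℂ such that the tensor T̃ := Σ_{j=2}^{a} aⱼ⊗(Mⱼ − λⱼM₁), regarded as an element of (span{a₂,…,a_a})⊗B⊗C, has rank at most r−1. Moreover, if M₁ has rank one as a linear map C^* → B, then for every choice of λ₂,…,λ_a ∈ ℂ the resulting tensor T̃ has rank at least r−1. -/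
open scoped BigOperators

noncomputable section

/-!
Take a decomposition `T = ∑ₛ uₛ ⊗ vₛ ⊗ wₛ` of length `r`. Since `M₁ ≠ 0`, some `u_{s₀}` has
nonzero first coordinate, and replacing `Mᵢ` by `Mᵢ - λᵢ M₁` with `λᵢ = u_{s₀,i} / u_{s₀,1}`
kills the `s₀`-th summand. Conversely, if `M₁ = v₀ ⊗ w₀`, then `T` is `T̃` (placed in the slices
`2, …, a`) plus the single simple tensor `(1, λ₂, …, λ_a) ⊗ v₀ ⊗ w₀`.
-/

theorem Matrix.exists_eq_vecMulVec_of_rank_le_one {K m n : Type*} [Field K] [Fintype n]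
    (M : Matrix m n K) (h : M.rank ≤ 1) : ∃ (v : m → K) (w : n → K), M = vecMulVec v w := by
  obtain ⟨v, hv⟩ :=
    finrank_le_one_iff.mp (show Module.finrank K (LinearMap.range M.mulVecLin) ≤ 1 from h)
  have hcol : ∀ k, ∃ c : K, c • (v : m → K) = M.col k := fun k => by
    classical
    obtain ⟨c, hc⟩ := hv ⟨M.mulVec (Pi.single k 1), Pi.single k 1, rfl⟩
    exact ⟨c, by simpa [Matrix.mulVec_single] using congrArg Subtype.val hc⟩
  choose w hw using hcol
  refine ⟨v, w, Matrix.ext fun j k => ?_⟩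
  rw [vecMulVec_apply, mul_comm, ← Matrix.col_apply M k j, ← hw k, Pi.smul_apply, smul_eq_mul]

section TensorRank

variable {a b c : ℕ}

theorem tensorRankLE_of_eq_sum {ι : Type*} [Fintype ι] {T : Tensor a b c}
    (u : ι → Fin a → ℂ) (v : ι → Fin b → ℂ) (w : ι → Fin c → ℂ)
    (h : ∀ i j k, T i j k = ∑ s, u s i * v s j * w s k) :
    tensorRankLE T (Fintype.card ι) := by
  let e := (Fintype.equivFin ι).symm
  exact ⟨u ∘ e, v ∘ e, w ∘ e, fun i j k => by rw [h, ← e.sum_comp]; rfl⟩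

theorem exists_tensorRankLE (T : Tensor a b c) : ∃ r, tensorRankLE T r := by
  classical
  refine ⟨_, tensorRankLE_of_eq_sum (ι := Fin a × Fin b) (fun p => Pi.single p.1 1)
    (fun p => Pi.single p.2 1) (fun p => T p.1 p.2) fun i j k => ?_⟩
  simp [Fintype.sum_prod_type, Pi.single_apply]

theorem tensorRankLE_tensorRank (T : Tensor a b c) : tensorRankLE T (tensorRank T) :=
  Nat.sInf_mem (exists_tensorRankLE T)

theorem tensorRank_le_of_tensorRankLE {T : Tensor a b c} {r : ℕ} (h : tensorRankLE T r) :
    tensorRank T ≤ r :=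
  Nat.sInf_le h

def substitute (T : Tensor (a + 1) b c) (lam : Fin a → ℂ) : Tensor a b c :=
  fun i j k => T i.succ j k - lam i * T 0 j k

theorem exists_tensorRankLE_substitute_sub_one {T : Tensor (a + 1) b c} {r : ℕ}
    (hT : tensorRankLE T r) (h0 : T 0 ≠ 0) :
    ∃ lam, tensorRankLE (substitute T lam) (r - 1) := by
  obtain ⟨u, v, w, hT⟩ := hT
  obtain ⟨s₀, hs₀⟩ : ∃ s₀, u s₀ 0 ≠ 0 := by
    by_contra! h
    exact h0 (funext₂ fun j k => by simp [hT, h])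
  obtain ⟨r, rfl⟩ := Nat.exists_eq_add_one_of_ne_zero s₀.pos.ne'
  let lam : Fin a → ℂ := fun i => u s₀ i.succ / u s₀ 0
  rw [Nat.add_sub_cancel]
  refine ⟨lam, fun t i => u (s₀.succAbove t) i.succ - lam i * u (s₀.succAbove t) 0,
    fun t => v (s₀.succAbove t), fun t => w (s₀.succAbove t), fun i j k => ?_⟩
  have hcoeff : u s₀ i.succ - lam i * u s₀ 0 = 0 := by simp [lam, hs₀]
  calc substitute T lam i j k = ∑ s, (u s i.succ - lam i * u s 0) * v s j * w s k := by
        simp only [substitute, hT, Finset.mul_sum, ← Finset.sum_sub_distrib]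
        exact Finset.sum_congr rfl fun s _ => by ring
    _ = _ := by simp [Fin.sum_univ_succAbove _ s₀, hcoeff]

theorem tensorRankLE_succ_of_substitute {T : Tensor (a + 1) b c} {v₀ : Fin b → ℂ}
    {w₀ : Fin c → ℂ} (h0 : ∀ j k, T 0 j k = v₀ j * w₀ k) (lam : Fin a → ℂ) {r : ℕ}
    (h : tensorRankLE (substitute T lam) r) : tensorRankLE T (r + 1) := by
  obtain ⟨u, v, w, h⟩ := h
  refine ⟨Fin.cons (Fin.cons 1 lam) fun t => Fin.cons 0 (u t), Fin.cons v₀ v, Fin.cons w₀ w,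
    Fin.cases (fun j k => ?_) fun i j k => ?_⟩
  · simp [Fin.sum_univ_succ, h0]
  · have hi := h i j k
    simp only [substitute] at hi
    simp only [Fin.sum_univ_succ, Fin.cons_zero, Fin.cons_succ]
    linear_combination hi + lam i * h0 j k

end TensorRank

/-- (Proposition `prop:slice`, the substitution method.) Write
`T = Σᵢ aᵢ ⊗ Mᵢ` with `M₁ = T 0 ≠ 0` and `R(T) = r`. Then there exist
constants `λⱼ` so that `T̃ = Σ_{j≥2} aⱼ ⊗ (Mⱼ - λⱼ M₁)` has rank at most
`r - 1`; and if `M₁` has rank one, then for every choice of the `λⱼ` the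
resulting tensor has rank at least `r - 1`. -/
theorem stmt6 {a b c : ℕ} (T : Tensor (a + 1) b c) (r : ℕ)
    (hM : T 0 ≠ 0) (hr : tensorRank T = r) :
    (∃ lam : Fin a → ℂ,
      tensorRank (fun (i : Fin a) (j : Fin b) (k : Fin c) =>
        T i.succ j k - lam i * T 0 j k) ≤ r - 1) ∧
    ((Matrix.of (T 0)).rank = 1 →
      ∀ lam : Fin a → ℂ,
        r - 1 ≤ tensorRank (fun (i : Fin a) (j : Fin b) (k : Fin c) =>
          T i.succ j k - lam i * T 0 j k)) := by
  refine ⟨?_, fun hrank lam => ?_⟩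
  · obtain ⟨lam, hlam⟩ :=
      exists_tensorRankLE_substitute_sub_one (hr ▸ tensorRankLE_tensorRank T) hM
    exact ⟨lam, tensorRank_le_of_tensorRankLE hlam⟩
  · obtain ⟨v, w, hvw⟩ := (Matrix.of (T 0)).exists_eq_vecMulVec_of_rank_le_one hrank.le
    have := tensorRank_le_of_tensorRankLE <| tensorRankLE_succ_of_substitute
      (fun j k => congrFun₂ hvw j k) lam (tensorRankLE_tensorRank (substitute T lam))
    change r - 1 ≤ tensorRank (substitute T lam)
    omega

end
end
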